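/- arXiv:2112.13526 — 4 statements merged into one kernel-verified Lean document; each statement's English description precedes it below -/
import Mathlib

section
/- Let T be a finite sharply 2-transitive permutation group on a finite set F with |F| ≥ 2. Then the set of fixed-point-free elements of T together with the identity forms an abelian normal subgroup of T (Jordan's theorem). -/
/-!
Fix `γ ≠ δ`. The elements sending `γ` to `δ` are in bijection with the points `≠ δ` (via the
image of `δ`), and those among them with a fixed point are in bijection with the points
`∉ {γ, δ}` (via the fixed point, which is unique). So exactly one fixed-point-free element sends
`γ` to `δ`. This uniqueness shows that the product of two fixed-point-free elements is `1` or
fixed-point-free, and that any two fixed-point-free elements are conjugate. So these elements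
together with `1` form a normal subgroup `A` whose nontrivial elements are all conjugate: they
share a prime order `p`, so `A` is a `p`-group, and the conjugates of a nontrivial central element
of `A` exhaust `A`.
-/

section ConjugateElements

variable {G : Type*} [Group G]

theorem IsConj.orderOf_eq {a b : G} (h : IsConj a b) : orderOf a = orderOf b := by
  obtain ⟨c, rfl⟩ := isConj_iff.mp h
  exact (MulEquiv.orderOf_eq (MulAut.conj c) a).symm

theorem Nat.prime_of_forall_orderOf_eq [Finite G] [Nontrivial G] {m : ℕ}
    (h : ∀ g : G, g ≠ 1 → orderOf g = m) : m.Prime := by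
  obtain ⟨g, hg⟩ := exists_ne (1 : G)
  have hm : orderOf g = m := h g hg
  have hp : m.minFac.Prime := Nat.minFac_prime fun hm1 => hg (orderOf_eq_one_iff.mp (hm.trans hm1))
  have hord : orderOf (g ^ (m / m.minFac)) = m.minFac :=
    hm ▸ orderOf_pow_orderOf_div (orderOf_pos g).ne' (hm ▸ Nat.minFac_dvd m)
  have hne : g ^ (m / m.minFac) ≠ 1 := fun h1 => hp.ne_one (by rw [← hord, h1, orderOf_one])
  rwa [← h _ hne, hord]

theorem IsPGroup.of_forall_orderOf_eq {p : ℕ} (h : ∀ g : G, g ≠ 1 → orderOf g = p) :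
    IsPGroup p G := by
  intro g
  refine ⟨1, ?_⟩
  rw [pow_one]
  by_cases hg : g = 1
  · rw [hg, one_pow]
  · rw [← h g hg, pow_orderOf_eq_one]

namespace Subgroup

variable {N : Subgroup G}

theorem exists_ne_one_mem_centralizer_of_forall_isConj [Finite G] [Nontrivial N]
    (hconj : ∀ a ∈ N, ∀ b ∈ N, a ≠ 1 → b ≠ 1 → IsConj a b) :
    ∃ z : G, z ∈ N ∧ z ∈ centralizer N ∧ z ≠ 1 := by
  obtain ⟨a, ha⟩ := exists_ne (1 : N)
  have hord : ∀ g : N, g ≠ 1 → orderOf g = orderOf a := fun g hg => by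
    rw [← orderOf_coe g, ← orderOf_coe a]
    exact (hconj g g.2 a a.2 (by simpa using hg) (by simpa using ha)).orderOf_eq
  have : Fact (orderOf a).Prime := ⟨Nat.prime_of_forall_orderOf_eq hord⟩
  have := (IsPGroup.of_forall_orderOf_eq hord).center_nontrivial
  obtain ⟨z, hz⟩ := exists_ne (1 : center N)
  refine ⟨z, (z : N).2, fun b hb => ?_, fun h1 => hz (Subtype.ext (Subtype.ext h1))⟩
  exact congrArg Subtype.val (mem_center_iff.mp z.2 ⟨b, hb⟩)

theorem mul_comm_of_forall_isConj [Finite G] (hN : N.Normal)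
    (hconj : ∀ a ∈ N, ∀ b ∈ N, a ≠ 1 → b ≠ 1 → IsConj a b) (a b : N) : a * b = b * a := by
  rcases subsingleton_or_nontrivial N with hN1 | hN1
  · exact Subsingleton.elim _ _
  obtain ⟨z, hzN, hz, hz1⟩ := exists_ne_one_mem_centralizer_of_forall_isConj hconj
  -- every nontrivial element of `N` is a conjugate of `z`, and the centralizer of `N` is normal
  have hle : N ≤ centralizer N := fun c hc => by
    by_cases hc1 : c = 1
    · exact hc1 ▸ one_mem _
    obtain ⟨t, rfl⟩ := isConj_iff.mp (hconj z hzN c hc hz1 hc1)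
    exact (normal_centralizer (H := N)).conj_mem z hz t
  exact Subtype.ext (mem_centralizer_iff.mp (hle b.2) a a.2)

end Subgroup

end ConjugateElements

namespace MulAction

variable {T F : Type*} [Group T] [MulAction T F]

variable (T F) in
def IsSharplyTwoTransitive : Prop :=
  ∀ a₁ a₂ b₁ b₂ : F, a₁ ≠ a₂ → b₁ ≠ b₂ → ∃! t : T, t • a₁ = b₁ ∧ t • a₂ = b₂

variable (F) in
def IsFixedPointFree (t : T) : Prop :=
  ∀ γ : F, t • γ ≠ γ

theorem IsFixedPointFree.inv {a : T} (ha : IsFixedPointFree F a) : IsFixedPointFree F a⁻¹ :=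
  fun γ hγ => ha γ (inv_smul_eq_iff.mp hγ).symm

theorem IsFixedPointFree.conj {a : T} (ha : IsFixedPointFree F a) (t : T) :
    IsFixedPointFree F (t * a * t⁻¹) := fun γ hγ => by
  rw [mul_smul, mul_smul, ← eq_inv_smul_iff] at hγ
  exact ha _ hγ

theorem ne_of_smul_eq_of_smul_eq_self {t : T} {γ δ ε : F} (hγδ : γ ≠ δ) (ht : t • γ = δ)
    (hε : t • ε = ε) : γ ≠ ε ∧ δ ≠ ε := by
  refine ⟨?_, ?_⟩
  · rintro rfl
    exact hγδ (hε.symm.trans ht)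
  · rintro rfl
    exact hγδ (smul_left_cancel t (ht.trans hε.symm))

namespace IsSharplyTwoTransitive

variable (h : IsSharplyTwoTransitive T F)
include h

theorem eq_one_of_smul_eq_self {t : T} {ε ε' : F} (hne : ε ≠ ε') (hε : t • ε = ε)
    (hε' : t • ε' = ε') : t = 1 :=
  (h ε ε' ε ε' hne hne).unique ⟨hε, hε'⟩ ⟨one_smul _ _, one_smul _ _⟩

theorem ncard_setOf_smul_eq [Finite F] {γ δ : F} (hγδ : γ ≠ δ) :
    {t : T | t • γ = δ}.ncard = Nat.card F - 1 := by
  have hcompl : ({δ}ᶜ : Set F).ncard = Nat.card F - 1 := by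
    rw [Set.ncard_compl, Set.ncard_singleton]
  rw [← hcompl]
  have hδ {t : T} (ht : t • γ = δ) : t • δ ≠ δ := fun htδ =>
    (ne_of_smul_eq_of_smul_eq_self hγδ ht htδ).2 rfl
  refine Set.ncard_congr (fun t _ => t • δ) (fun t ht => hδ ht) ?_ ?_
  · rintro s t (hs : s • γ = δ) (ht : t • γ = δ) hst
    exact (h γ δ δ (t • δ) hγδ (hδ ht).symm).unique ⟨hs, hst⟩ ⟨ht, rfl⟩
  · rintro b (hb : b ≠ δ)
    obtain ⟨t, ⟨ht, htb⟩, -⟩ := h γ δ δ b hγδ hb.symm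
    exact ⟨t, ht, htb⟩

theorem ncard_setOf_smul_eq_and_not_isFixedPointFree [Finite F] {γ δ : F} (hγδ : γ ≠ δ) :
    {t : T | t • γ = δ ∧ ¬IsFixedPointFree F t}.ncard = Nat.card F - 2 := by
  have hcompl : ({γ, δ}ᶜ : Set F).ncard = Nat.card F - 2 := by
    rw [Set.ncard_compl, Set.ncard_pair hγδ]
  rw [← hcompl]
  have hfix {t : T} (ht : ¬IsFixedPointFree F t) : ∃ ε : F, t • ε = ε := by
    simpa [IsFixedPointFree] using ht
  refine Set.ncard_congr (fun t ht => (hfix ht.2).choose) ?_ ?_ ?_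
  · intro t ht
    have := ne_of_smul_eq_of_smul_eq_self hγδ ht.1 (hfix ht.2).choose_spec
    simpa [eq_comm] using this
  · intro s t hs ht hst
    have hs' := (hfix hs.2).choose_spec
    have ht' := (hfix ht.2).choose_spec
    rw [hst] at hs'
    obtain ⟨hγ, hδ⟩ := ne_of_smul_eq_of_smul_eq_self hγδ ht.1 ht'
    exact (h γ _ δ _ hγ hδ).unique ⟨hs.1, hs'⟩ ⟨ht.1, ht'⟩
  · intro ε hε
    simp only [Set.mem_compl_iff, Set.mem_insert_iff, Set.mem_singleton_iff, not_or] at hε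
    obtain ⟨t, ⟨ht, htε⟩, -⟩ := h γ ε δ ε (Ne.symm hε.1) (Ne.symm hε.2)
    have hnot : ¬IsFixedPointFree F t := fun hfpf => hfpf ε htε
    refine ⟨t, ⟨ht, hnot⟩, ?_⟩
    by_contra hne
    -- a nontrivial element has at most one fixed point
    have h1 := h.eq_one_of_smul_eq_self hne (hfix hnot).choose_spec htε
    exact hγδ (by rw [← ht, h1, one_smul])

theorem existsUnique_isFixedPointFree_smul_eq [Finite T] [Finite F] {γ δ : F} (hγδ : γ ≠ δ) :
    ∃! t : T, IsFixedPointFree F t ∧ t • γ = δ := by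
  have hF : 2 ≤ Nat.card F := (Finite.one_lt_card_iff_nontrivial).mpr ⟨γ, δ, hγδ⟩
  have hdiff : {t : T | IsFixedPointFree F t ∧ t • γ = δ} =
      {t | t • γ = δ} \ {t | t • γ = δ ∧ ¬IsFixedPointFree F t} := by
    ext t
    simp only [Set.mem_ofPred_eq, Set.mem_sdiff]
    tauto
  have hcard : {t : T | IsFixedPointFree F t ∧ t • γ = δ}.ncard = 1 := by
    rw [hdiff, Set.ncard_sdiff (fun t ht => ht.1), h.ncard_setOf_smul_eq hγδ,
      h.ncard_setOf_smul_eq_and_not_isFixedPointFree hγδ]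
    omega
  obtain ⟨t, ht⟩ := Set.ncard_eq_one.mp hcard
  exact ⟨t, (Set.ext_iff.mp ht t).mpr rfl, fun s hs => (Set.ext_iff.mp ht s).mp hs⟩

theorem mul_eq_one_or_isFixedPointFree [Finite T] [Finite F] {a b : T}
    (ha : IsFixedPointFree F a) (hb : IsFixedPointFree F b) :
    a * b = 1 ∨ IsFixedPointFree F (a * b) := by
  refine or_iff_not_imp_right.mpr fun hab => ?_
  obtain ⟨γ, hγ⟩ : ∃ γ : F, (a * b) • γ = γ := by simpa [IsFixedPointFree] using hab
  -- `b` and `a⁻¹` are fixed-point-free and agree at `γ`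
  have hba : b = a⁻¹ := (h.existsUnique_isFixedPointFree_smul_eq (hb γ).symm).unique
    ⟨hb, rfl⟩ ⟨ha.inv, by rw [inv_smul_eq_iff, ← mul_smul, hγ]⟩
  rw [hba, mul_inv_cancel]

theorem isConj_of_isFixedPointFree [Finite T] [Finite F] [Nonempty F] {a b : T}
    (ha : IsFixedPointFree F a) (hb : IsFixedPointFree F b) : IsConj a b := by
  obtain ⟨γ⟩ := ‹Nonempty F›
  obtain ⟨t, ⟨htγ, hta⟩, -⟩ := h γ (a • γ) γ (b • γ) (ha γ).symm (hb γ).symm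
  have hconj : (t * a * t⁻¹) • γ = b • γ := by
    rw [mul_smul, mul_smul, inv_smul_eq_iff.mpr htγ.symm, hta]
  exact isConj_iff.mpr ⟨t, (h.existsUnique_isFixedPointFree_smul_eq (hb γ).symm).unique
    ⟨ha.conj t, hconj⟩ ⟨hb, rfl⟩⟩

def fixedPointFreeSubgroup [Finite T] [Finite F] : Subgroup T where
  carrier := {t | t = 1 ∨ IsFixedPointFree F t}
  one_mem' := Or.inl rfl
  mul_mem' := by
    rintro a b (rfl | ha) (rfl | hb)
    · exact Or.inl (mul_one 1)
    · exact (one_mul b).symm ▸ Or.inr hb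
    · exact (mul_one a).symm ▸ Or.inr ha
    · exact h.mul_eq_one_or_isFixedPointFree ha hb
  inv_mem' := by
    rintro a (rfl | ha)
    · exact Or.inl inv_one
    · exact Or.inr ha.inv

theorem fixedPointFreeSubgroup_normal [Finite T] [Finite F] :
    h.fixedPointFreeSubgroup.Normal where
  conj_mem := by
    rintro a (rfl | ha) t
    · exact Or.inl (by group)
    · exact Or.inr (ha.conj t)

theorem mul_comm_of_mem_fixedPointFreeSubgroup [Finite T] [Finite F] [Nonempty F]
    (a b : h.fixedPointFreeSubgroup) : a * b = b * a :=
  Subgroup.mul_comm_of_forall_isConj h.fixedPointFreeSubgroup_normal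
    (fun _ hx _ hy hx1 hy1 =>
      h.isConj_of_isFixedPointFree (hx.resolve_left hx1) (hy.resolve_left hy1)) a b

end IsSharplyTwoTransitive

end MulAction

theorem stmt_7_general (T F : Type*) [Group T] [Finite T] [Finite F] [Nontrivial F]
    [MulAction T F]
    (h2 : ∀ a₁ a₂ b₁ b₂ : F, a₁ ≠ a₂ → b₁ ≠ b₂ →
      ∃! t : T, t • a₁ = b₁ ∧ t • a₂ = b₂) :
    ∃ A : Subgroup T, A.Normal ∧ (∀ a b : A, a * b = b * a) ∧
      (A : Set T) = {t : T | t = 1 ∨ ∀ γ : F, t • γ ≠ γ} :=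
  have h : MulAction.IsSharplyTwoTransitive T F := h2
  ⟨h.fixedPointFreeSubgroup, h.fixedPointFreeSubgroup_normal,
    h.mul_comm_of_mem_fixedPointFreeSubgroup, rfl⟩

/-- Jordan's theorem: in a finite sharply 2-transitive permutation group `T` on a finite
set `F` (`|F| ≥ 2`), the fixed-point-free elements together with the identity form an
abelian normal subgroup of `T`. -/
theorem stmt_7 (T F : Type*) [Group T] [Finite T] [Finite F] [Nontrivial F]
    [MulAction T F] [FaithfulSMul T F]
    (h2 : ∀ a₁ a₂ b₁ b₂ : F, a₁ ≠ a₂ → b₁ ≠ b₂ →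
      ∃! t : T, t • a₁ = b₁ ∧ t • a₂ = b₂) :
    ∃ A : Subgroup T, A.Normal ∧ (∀ a b : A, a * b = b * a) ∧
      (A : Set T) = {t : T | t = 1 ∨ ∀ γ : F, t • γ ≠ γ} :=
  stmt_7_general T F h2
end

section
/- Let T be a finite sharply 2-transitive permutation group on a finite set F with |F| ≥ 2. Then the set N of fixed-point-free elements together with the identity has cardinality |F|, and N acts regularly (sharply transitively) on F. -/
/-- In a finite sharply 2-transitive permutation group `T` on a finite set `F`
(`|F| ≥ 2`), the set `N` of fixed-point-free elements together with the identity has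
cardinality `|F|` and acts regularly on `F`. -/
theorem stmt_8 (T F : Type*) [Group T] [Finite T] [Finite F] [Nontrivial F]
    [MulAction T F] [FaithfulSMul T F]
    (h2 : ∀ a₁ a₂ b₁ b₂ : F, a₁ ≠ a₂ → b₁ ≠ b₂ →
      ∃! t : T, t • a₁ = b₁ ∧ t • a₂ = b₂) :
    Nat.card {t : T // t = 1 ∨ ∀ γ : F, t • γ ≠ γ} = Nat.card F ∧
    ∀ a b : F, ∃! t : T, (t = 1 ∨ ∀ γ : F, t • γ ≠ γ) ∧ t • a = b := by
  classical
  have instT := Fintype.ofFinite T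
  have instF := Fintype.ofFinite F
  have fixone : ∀ (t : T) (x y : F), x ≠ y → t • x = x → t • y = y → t = 1 := by
    intro t x y hxy hx hy
    obtain ⟨u, -, hu⟩ := h2 x y x y hxy hxy
    have h1 := hu 1 ⟨one_smul T x, one_smul T y⟩
    have ht := hu t ⟨hx, hy⟩
    rw [ht, h1]
  have key : ∀ a b : F, ∃! t : T, (t = 1 ∨ ∀ γ : F, t • γ ≠ γ) ∧ t • a = b := by
    intro a b
    by_cases hab : a = b
    · subst hab
      refine ⟨1, ⟨Or.inl rfl, one_smul T a⟩, ?_⟩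
      rintro t ⟨(rfl | hfpf), hta⟩
      · rfl
      · exact absurd hta (hfpf a)
    · obtain ⟨x₀, hx₀⟩ := exists_ne a
      -- e₁ : elements mapping a to b ≃ {c // c ≠ b}
      have e₁ : {t : T // t • a = b} ≃ {c : F // c ≠ b} := by
        refine Equiv.ofBijective (fun t => ⟨t.1 • x₀, ?_⟩) ⟨?_, ?_⟩
        · intro h
          exact hx₀ (MulAction.injective t.1 (h.trans t.2.symm))
        · rintro ⟨t₁, h₁⟩ ⟨t₂, h₂⟩ h
          simp only [Subtype.mk.injEq] at h ⊢
          have hb : b ≠ t₁ • x₀ := fun h' =>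
            hx₀ (MulAction.injective t₁ ((h₁.trans h') : t₁ • a = t₁ • x₀)).symm
          obtain ⟨u, -, hu⟩ := h2 a x₀ b (t₁ • x₀) (Ne.symm hx₀) hb
          have e1 := hu t₁ ⟨h₁, rfl⟩
          have e2 := hu t₂ ⟨h₂, h.symm⟩
          exact e1.trans e2.symm
        · rintro ⟨c, hc⟩
          obtain ⟨t, ⟨hta, htx⟩, -⟩ := h2 a x₀ b c (Ne.symm hx₀) (Ne.symm hc)
          exact ⟨⟨t, hta⟩, Subtype.ext htx⟩
      -- e₂ : elements mapping a to b with a fixed point ≃ {c // c ≠ b ∧ c ≠ a}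
      have e₂ : {c : F // c ≠ b ∧ c ≠ a} ≃
          {s : {t : T // t • a = b} // ∃ c : F, s.1 • c = c} := by
        refine Equiv.ofBijective (fun c =>
          ⟨⟨(h2 a c.1 b c.1 (Ne.symm c.2.2) (Ne.symm c.2.1)).choose,
            (h2 a c.1 b c.1 (Ne.symm c.2.2) (Ne.symm c.2.1)).choose_spec.1.1⟩,
            ⟨c.1, (h2 a c.1 b c.1 (Ne.symm c.2.2) (Ne.symm c.2.1)).choose_spec.1.2⟩⟩)
          ⟨?_, ?_⟩
        · rintro ⟨c₁, hc₁⟩ ⟨c₂, hc₂⟩ h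
          simp only [Subtype.mk.injEq] at h ⊢
          set t := (h2 a c₁ b c₁ (Ne.symm hc₁.2) (Ne.symm hc₁.1)).choose with htdef
          have h1 := (h2 a c₁ b c₁ (Ne.symm hc₁.2) (Ne.symm hc₁.1)).choose_spec.1
          have h2' := (h2 a c₂ b c₂ (Ne.symm hc₂.2) (Ne.symm hc₂.1)).choose_spec.1
          rw [← h] at h2'
          by_contra hne
          have := fixone t c₁ c₂ hne h1.2 h2'.2
          rw [this, one_smul] at h2'
          exact hab h2'.1
        · rintro ⟨⟨t, hta⟩, c, hc⟩
          have hca : c ≠ a := by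
            rintro rfl
            exact hab (hc.symm.trans hta)
          have hcb : c ≠ b := by
            rintro rfl
            exact hca (MulAction.injective t (hc.trans hta.symm))
          refine ⟨⟨c, hcb, hca⟩, ?_⟩
          have := (h2 a c b c (Ne.symm hca) (Ne.symm hcb)).choose_spec
          have ht' := this.2 t ⟨hta, hc⟩
          exact Subtype.ext (Subtype.ext ht'.symm)
      -- now counting
      have e₃ : {s : {t : T // t • a = b} // ∃ c : F, s.1 • c = c} ≃
          {x : {c : F // c ≠ b} // ¬ x.1 = a} :=
        e₂.symm.trans ((Equiv.subtypeSubtypeEquivSubtypeInter _ _).symm)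
      have hone : Fintype.card {x : {c : F // c ≠ b} // x.1 = a} = 1 := by
        rw [Fintype.card_eq_one_iff]
        refine ⟨⟨⟨a, Ne.symm (fun h => hab h.symm)⟩, rfl⟩, ?_⟩
        rintro ⟨⟨x, hx⟩, hxa⟩
        simp only [Subtype.mk.injEq]
        exact hxa
      have hcompl1 : Fintype.card {x : {c : F // c ≠ b} // ¬ x.1 = a} =
          Fintype.card {c : F // c ≠ b} - 1 := by
        rw [Fintype.card_subtype_compl, hone]
      have hcompl2 : Fintype.card {s : {t : T // t • a = b} // ¬ ∃ c : F, s.1 • c = c} =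
          Fintype.card {t : T // t • a = b} -
            Fintype.card {s : {t : T // t • a = b} // ∃ c : F, s.1 • c = c} :=
        Fintype.card_subtype_compl _
      have hAcard : Fintype.card {t : T // t • a = b} = Fintype.card {c : F // c ≠ b} :=
        Fintype.card_congr e₁
      have hQcard := Fintype.card_congr e₃
      have hpos : 0 < Fintype.card {c : F // c ≠ b} :=
        Fintype.card_pos_iff.mpr ⟨⟨a, fun h => hab h⟩⟩
      have hfpf1 : Fintype.card {s : {t : T // t • a = b} // ¬ ∃ c : F, s.1 • c = c} = 1 := by
        rw [hcompl2, hQcard, hcompl1, hAcard]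
        omega
      obtain ⟨⟨⟨t, hta⟩, htq⟩, huniq⟩ := Fintype.card_eq_one_iff.mp hfpf1
      push_neg at htq
      refine ⟨t, ⟨Or.inr htq, hta⟩, ?_⟩
      rintro t' ⟨(rfl | hfpf'), hta'⟩
      · rw [one_smul] at hta'
        exact absurd hta' hab
      · have := huniq ⟨⟨t', hta'⟩, by push_neg; exact hfpf'⟩
        exact congrArg (fun s => s.1.1) this
  refine ⟨?_, key⟩
  obtain ⟨a₀⟩ := (inferInstance : Nonempty F)
  have hbij : Function.Bijective
      (fun t : {t : T // t = 1 ∨ ∀ γ : F, t • γ ≠ γ} => t.1 • a₀) := by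
    constructor
    · rintro ⟨t₁, h₁⟩ ⟨t₂, h₂⟩ h
      obtain ⟨u, -, hu⟩ := key a₀ (t₁ • a₀)
      have e1 := hu t₁ ⟨h₁, rfl⟩
      have e2 := hu t₂ ⟨h₂, h.symm⟩
      exact Subtype.ext (e1.trans e2.symm)
    · intro b
      obtain ⟨t, ⟨ht, hta⟩, -⟩ := key a₀ b
      exact ⟨⟨t, ht⟩, hta⟩
  exact Nat.card_eq_of_bijective _ hbij
end

section
/- Let T be a sharply 2-transitive permutation group on F, α ∈ F, and suppose T_α contains an involution j. Then T = T_α · N_j, where N_j = {jk : k an involution of T}. -/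
/-- If the stabilizer `T_α` of a sharply 2-transitive permutation group `T` on `F`
contains an involution `j`, then `T = T_α · N_j` where `N_j = {j k : k an involution}`. -/
theorem stmt_10 (T F : Type*) [Group T] [Nontrivial F] [MulAction T F] [FaithfulSMul T F]
    (h2 : ∀ a₁ a₂ b₁ b₂ : F, a₁ ≠ a₂ → b₁ ≠ b₂ →
      ∃! t : T, t • a₁ = b₁ ∧ t • a₂ = b₂)
    (α : F) (j : T) (hj : j ∈ MulAction.stabilizer T α) (hj2 : j ^ 2 = 1) (hj1 : j ≠ 1) :
    ∀ t : T, ∃ s k : T, s ∈ MulAction.stabilizer T α ∧ k ^ 2 = 1 ∧ k ≠ 1 ∧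
      t = s * (j * k) := by
  intro t
  have hjα : j • α = α := hj
  have hjj : j * j = 1 := by rw [← sq]; exact hj2
  -- find an involution k ≠ 1 with k • α = t⁻¹ • α
  have key : ∃ k : T, k ^ 2 = 1 ∧ k ≠ 1 ∧ k • α = t⁻¹ • α := by
    by_cases hβ : t⁻¹ • α = α
    · exact ⟨j, hj2, hj1, hjα.trans hβ.symm⟩
    · have hne : α ≠ t⁻¹ • α := fun h => hβ h.symm
      obtain ⟨k, ⟨hk1, hk2⟩, _⟩ := h2 α (t⁻¹ • α) (t⁻¹ • α) α hne hne.symm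
      refine ⟨k, ?_, ?_, hk1⟩
      · obtain ⟨u, -, hu⟩ := h2 α (t⁻¹ • α) α (t⁻¹ • α) hne hne
        have h1 : k ^ 2 = u := hu _ (by
          simp only [sq, mul_smul, hk1, hk2, and_self])
        have h0 : (1 : T) = u := hu 1 (by simp)
        rw [h1, ← h0]
      · rintro rfl
        simp at hk1
        exact hβ hk1.symm
  obtain ⟨k, hk2, hk1, hkα⟩ := key
  have hkk : k * k = 1 := by rw [← sq]; exact hk2
  refine ⟨t * k * j, k, ?_, hk2, hk1, ?_⟩
  · show (t * k * j) • α = α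
    rw [mul_smul, mul_smul, hjα, hkα, smul_inv_smul]
  · calc t = t * (k * ((j * j) * k)) := by rw [hjj, one_mul, hkk, mul_one]
      _ = t * k * j * (j * k) := by group
end

section
/- In a finite Frobenius group G with kernel K and complement H, every complement H contains at most one involution; equivalently, a Sylow 2-subgroup of H is cyclic or generalized quaternion. -/
open Finset

/-- In a finite Frobenius group `G` with complement `H` (so `H ∩ H^g = 1` for
`g ∉ H`), the complement `H` contains at most one involution. -/
theorem stmt_15 (G : Type*) [Group G] [Finite G]
    (H : Subgroup G) (hne : H ≠ ⊥) (hpr : H ≠ ⊤)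
    (hFrob : ∀ g : G, g ∉ H → ∀ x : G, x ∈ H → g⁻¹ * x * g ∈ H → x = 1) :
    ∀ a b : G, a ∈ H → b ∈ H → a ^ 2 = 1 → a ≠ 1 → b ^ 2 = 1 → b ≠ 1 → a = b := by
  classical
  cases nonempty_fintype G
  intro a b ha hb ha2 ha1 hb2 hb1
  by_contra hab
  have haa : a * a = 1 := by rw [← sq]; exact ha2
  have hbb : b * b = 1 := by rw [← sq]; exact hb2
  -- if a nontrivial element of H stays in H under conjugation by g, then g ∈ H
  have key : ∀ g x : G, x ∈ H → x ≠ 1 → g⁻¹ * x * g ∈ H → g ∈ H := by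
    intro g x hx hx1 hgx
    by_contra hg
    exact hx1 (hFrob g hg x hx hgx)
  -- numbers
  set n := Fintype.card G with hn
  set h := Nat.card H with hh
  set m := H.index with hm
  have hnmh : m * h = n := by
    rw [hn, hm, hh, ← Nat.card_eq_fintype_card]
    exact H.index_mul_card
  have hh1 : 1 ≤ h := Nat.card_pos
  have hm2 : 2 ≤ m := by
    have h0 : m ≠ 0 := H.index_ne_zero_of_finite
    have h1 : m ≠ 1 := fun e => hpr (Subgroup.index_eq_one.mp e)
    omega
  -- the "kernel" : elements in no conjugate of H
  set K0 : Finset G := univ.filter (fun x => ∀ g : G, g⁻¹ * x * g ∉ H) with hK0def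
  have hK0mem : ∀ x : G, x ∈ K0 ↔ ∀ g : G, g⁻¹ * x * g ∉ H := by
    intro x; simp [hK0def]
  have hK0notH : ∀ x ∈ K0, x ∉ H := by
    intro x hx
    have := (hK0mem x).mp hx 1
    simpa using this
  -- the subgroup H as a finset
  set HF : Finset G := univ.filter (fun x => x ∈ H) with hHFdef
  have hHFcard : HF.card = h := by
    rw [hh, Nat.card_eq_fintype_card, Fintype.card_subtype, hHFdef]
  -- union of conjugates of H
  set Uc : Finset G := univ.filter (fun x => ∃ g : G, g⁻¹ * x * g ∈ H) with hUcdef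
  have hK0compl : K0 = univ \ Uc := by
    rw [hUcdef, ← Finset.filter_not]
    apply Finset.filter_congr
    intro x _
    push_neg
    rfl
  -- lower bound on the union of conjugates
  letI : Fintype (G ⧸ H) := Fintype.ofFinite _
  have hQcard : Fintype.card (G ⧸ H) = m := by
    rw [hm, Subgroup.index, Nat.card_eq_fintype_card]
  set F : (G ⧸ H) → Finset G :=
    fun q => (HF.image (fun x => q.out * x * q.out⁻¹)) \ {1} with hFdef
  have hFsub : ∀ q, F q ⊆ Uc \ {1} := by
    intro q x hx
    rw [hFdef] at hx
    simp only [Finset.mem_sdiff, Finset.mem_image, Finset.mem_singleton] at hx ⊢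
    obtain ⟨⟨y, hy, hxy⟩, hx1⟩ := hx
    refine ⟨?_, hx1⟩
    rw [hUcdef]
    simp only [Finset.mem_filter, Finset.mem_univ, true_and]
    refine ⟨q.out, ?_⟩
    have : q.out⁻¹ * x * q.out = y := by rw [← hxy]; group
    rw [this]
    simpa [hHFdef] using hy
  have hFcard : ∀ q, (F q).card = h - 1 := by
    intro q
    rw [hFdef]
    have hinj : Set.InjOn (fun x => q.out * x * q.out⁻¹) HF := by
      intro x _ y _ hxy
      simpa using mul_left_cancel (mul_right_cancel hxy)
    rw [Finset.card_sdiff_of_subset, Finset.card_image_of_injOn hinj, hHFcard]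
    · simp
    · simp only [Finset.singleton_subset_iff, Finset.mem_image]
      exact ⟨1, by simp [hHFdef, H.one_mem]⟩
  have hFdisj : ∀ q₁ ∈ (univ : Finset (G ⧸ H)), ∀ q₂ ∈ (univ : Finset (G ⧸ H)),
      q₁ ≠ q₂ → Disjoint (F q₁) (F q₂) := by
    intro q₁ _ q₂ _ hq
    rw [Finset.disjoint_left]
    intro x hx₁ hx₂
    rw [hFdef] at hx₁ hx₂
    simp only [Finset.mem_sdiff, Finset.mem_image, Finset.mem_singleton] at hx₁ hx₂
    obtain ⟨⟨y₁, hy₁, e₁⟩, hx1⟩ := hx₁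
    obtain ⟨⟨y₂, hy₂, e₂⟩, _⟩ := hx₂
    rw [hHFdef] at hy₁ hy₂
    simp only [Finset.mem_filter] at hy₁ hy₂
    have hy₁H := hy₁.2
    have hy₂H := hy₂.2
    set g := q₂.out⁻¹ * q₁.out with hg
    have hconj : g⁻¹ * y₂ * g = y₁ := by
      have e12 : q₁.out * y₁ * q₁.out⁻¹ = q₂.out * y₂ * q₂.out⁻¹ := by rw [e₁, e₂]
      rw [hg]
      calc (q₂.out⁻¹ * q₁.out)⁻¹ * y₂ * (q₂.out⁻¹ * q₁.out)
          = q₁.out⁻¹ * (q₂.out * y₂ * q₂.out⁻¹) * q₁.out := by group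
        _ = q₁.out⁻¹ * (q₁.out * y₁ * q₁.out⁻¹) * q₁.out := by rw [← e12]
        _ = y₁ := by group
    have hy₂1 : y₂ ≠ 1 := by
      intro e
      rw [e] at e₂
      simp at e₂
      exact hx1 e₂.symm
    have hgH : g ∈ H := key g y₂ hy₂H hy₂1 (hconj ▸ hy₁H)
    apply hq
    have : (QuotientGroup.mk q₁.out : G ⧸ H) = QuotientGroup.mk q₂.out := by
      rw [QuotientGroup.eq]
      have : q₁.out⁻¹ * q₂.out = (q₂.out⁻¹ * q₁.out)⁻¹ := by group
      rw [this, ← hg]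
      exact H.inv_mem hgH
    rw [QuotientGroup.out_eq', QuotientGroup.out_eq'] at this
    exact this
  have hUnion : (Finset.univ.biUnion F).card = m * (h - 1) := by
    rw [Finset.card_biUnion hFdisj]
    simp only [hFcard, Finset.sum_const, smul_eq_mul, Finset.card_univ, hQcard]
  have hUcbig : m * (h - 1) + 1 ≤ Uc.card := by
    have hsub : Finset.univ.biUnion F ∪ {1} ⊆ Uc := by
      intro x hx
      rcases Finset.mem_union.mp hx with hx | hx
      · obtain ⟨q, _, hq⟩ := Finset.mem_biUnion.mp hx
        exact (Finset.mem_sdiff.mp (hFsub q hq)).1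
      · rw [Finset.mem_singleton.mp hx, hUcdef]
        simp only [Finset.mem_filter, Finset.mem_univ, true_and]
        exact ⟨1, by simpa using H.one_mem⟩
    have hdisj : Disjoint (Finset.univ.biUnion F) ({1} : Finset G) := by
      rw [Finset.disjoint_right]
      intro x hx hx'
      obtain ⟨q, _, hq⟩ := Finset.mem_biUnion.mp hx'
      exact (Finset.mem_sdiff.mp (hFsub q hq)).2 hx
    calc m * (h - 1) + 1 = (Finset.univ.biUnion F ∪ {1}).card := by
          rw [Finset.card_union_of_disjoint hdisj, hUnion, Finset.card_singleton]
      _ ≤ Uc.card := Finset.card_le_card hsub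
  have hK0card : K0.card ≤ m - 1 := by
    have hcc : K0.card = n - Uc.card := by
      rw [hK0compl, Finset.card_sdiff_of_subset (Finset.subset_univ _), Finset.card_univ, hn]
    have hUcn : Uc.card ≤ n := by
      rw [hn, ← Finset.card_univ]
      exact Finset.card_le_card (Finset.subset_univ _)
    have hmh : m * (h - 1) + m = m * h := by
      rw [← Nat.mul_succ]
      congr 1
      omega
    omega
  -- the set of elements outside H
  set s : Finset G := univ.filter (fun g : G => g ∉ H) with hsdef
  have hscard : s.card = n - h := by
    rw [hsdef, Finset.filter_not, Finset.card_sdiff_of_subset (Finset.filter_subset _ _),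
      Finset.card_univ, ← hHFdef, hHFcard, hn]
  -- main claim : the image of g ↦ g⁻¹ u g u on G \ H is exactly K0
  have main : ∀ u : G, u ∈ H → u * u = 1 → u ≠ 1 →
      s.image (fun g => g⁻¹ * u * g * u) = K0 := by
    intro u hu huu hu1
    have huinv : u⁻¹ = u := inv_eq_of_mul_eq_one_right huu
    set Au : Finset G := s.image (fun g => g⁻¹ * u * g * u) with hAudef
    -- the image is contained in K0
    have hAuK0 : Au ⊆ K0 := by
      intro x hx
      rw [hAudef] at hx
      obtain ⟨g, hg, hxg⟩ := Finset.mem_image.mp hx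
      rw [hsdef] at hg
      simp only [Finset.mem_filter] at hg
      have hgH : g ∉ H := hg.2
      set v : G := g⁻¹ * u * g with hv
      have hvv : v * v = 1 := by
        rw [hv]
        calc (g⁻¹ * u * g) * (g⁻¹ * u * g) = g⁻¹ * (u * u) * g := by group
          _ = 1 := by rw [huu]; group
      have hvinv : v⁻¹ = v := inv_eq_of_mul_eq_one_right hvv
      have hxvu : x = v * u := by rw [← hxg, hv]
      -- x ≠ 1
      have hx1 : x ≠ 1 := by
        intro e
        have hveq : v = u := by
          have : v = u⁻¹ := eq_inv_of_mul_eq_one_left (by rw [← hxvu]; exact e)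
          rw [huinv] at this; exact this
        have : g⁻¹ * u * g ∈ H := by rw [← hv, hveq]; exact hu
        exact hgH (key g u hu hu1 this)
      -- u inverts x
      have hinvu : u⁻¹ * x * u = x⁻¹ := by
        rw [hxvu, huinv]
        calc u * (v * u) * u = u * v * (u * u) := by group
          _ = u * v := by rw [huu]; group
          _ = u⁻¹ * v⁻¹ := by rw [huinv, hvinv]
          _ = (v * u)⁻¹ := by group
      -- v inverts x
      have hinvv : v⁻¹ * x * v = x⁻¹ := by
        rw [hxvu, hvinv]
        calc v * (v * u) * v = (v * v) * (u * v) := by group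
          _ = u * v := by rw [hvv]; group
          _ = u⁻¹ * v⁻¹ := by rw [huinv, hvinv]
          _ = (v * u)⁻¹ := by group
      -- if w inverts x and c⁻¹ x c ∈ H then c⁻¹ w c ∈ H
      have step : ∀ w c : G, w⁻¹ * x * w = x⁻¹ → c⁻¹ * x * c ∈ H → c⁻¹ * w * c ∈ H := by
        intro w c hwx hcx
        have hy1 : c⁻¹ * x * c ≠ 1 := by
          intro e
          apply hx1
          have : x = c * 1 * c⁻¹ := by rw [← e]; group
          rw [this]; group
        refine key (c⁻¹ * w * c) (c⁻¹ * x * c) hcx hy1 ?_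
        have hcalc : (c⁻¹ * w * c)⁻¹ * (c⁻¹ * x * c) * (c⁻¹ * w * c)
            = c⁻¹ * (w⁻¹ * x * w) * c := by group
        rw [hcalc, hwx]
        have : c⁻¹ * x⁻¹ * c = (c⁻¹ * x * c)⁻¹ := by group
        rw [this]
        exact H.inv_mem hcx
      -- x lies in no conjugate of H
      rw [hK0mem]
      intro c hcx
      have hcu : c⁻¹ * u * c ∈ H := step u c hinvu hcx
      have hcH : c ∈ H := key c u hu hu1 hcu
      have hcv : c⁻¹ * v * c ∈ H := step v c hinvv hcx
      have hvH : v ∈ H := by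
        have : v = c * (c⁻¹ * v * c) * c⁻¹ := by group
        rw [this]
        exact H.mul_mem (H.mul_mem hcH hcv) (H.inv_mem hcH)
      exact hgH (key g u hu hu1 (hv ▸ hvH))
    -- fibers of the map have size at most h
    have hfiber : s.card ≤ h * Au.card := by
      apply Finset.card_le_mul_card_image
      intro x hx
      obtain ⟨g₀, hg₀, hxg₀⟩ := Finset.mem_image.mp hx
      have hmaps : ∀ g ∈ s.filter (fun g => g⁻¹ * u * g * u = x), g * g₀⁻¹ ∈ HF := by
        intro g hg
        simp only [Finset.mem_filter] at hg
        have hgx := hg.2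
        have heq : g⁻¹ * u * g = g₀⁻¹ * u * g₀ := mul_right_cancel (by rw [hxg₀, hgx])
        have hconj : (g * g₀⁻¹)⁻¹ * u * (g * g₀⁻¹) = g₀ * (g⁻¹ * u * g) * g₀⁻¹ := by group
        have : (g * g₀⁻¹)⁻¹ * u * (g * g₀⁻¹) = u := by
          rw [hconj, heq]; group
        have hmem : g * g₀⁻¹ ∈ H := key (g * g₀⁻¹) u hu hu1 (by rw [this]; exact hu)
        simp [hHFdef, hmem]
      have hinj : Set.InjOn (fun g => g * g₀⁻¹)
          (s.filter (fun g => g⁻¹ * u * g * u = x)) := by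
        intro p _ q _ hpq
        simpa using mul_right_cancel hpq
      calc (s.filter (fun g => g⁻¹ * u * g * u = x)).card
          ≤ HF.card := Finset.card_le_card_of_injOn _ hmaps hinj
        _ = h := hHFcard
    -- conclude by cardinality
    have hAucard : m - 1 ≤ Au.card := by
      have h1 : (m - 1) * h = n - h := by
        rw [Nat.sub_mul, hnmh, one_mul]
      have h2 : (m - 1) * h ≤ Au.card * h := by
        rw [h1, ← hscard, mul_comm]
        exact hfiber
      exact Nat.le_of_mul_le_mul_right h2 (by omega)
    exact Finset.eq_of_subset_of_card_le hAuK0 (le_trans hK0card hAucard)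
  have hKa := main a ha haa ha1
  have hKb := main b hb hbb hb1
  -- s is nonempty, hence K0 is nonempty
  have hsne : s.Nonempty := by
    by_contra hse
    apply hpr
    rw [Finset.not_nonempty_iff_eq_empty, hsdef, Finset.filter_eq_empty_iff] at hse
    rw [Subgroup.eq_top_iff']
    intro g
    by_contra hgH
    exact hse (Finset.mem_univ g) hgH
  have hK0ne : K0.Nonempty := by
    rw [← hKa]
    exact hsne.image _
  obtain ⟨k, hk⟩ := hK0ne
  -- k is inverted by both a and b
  have hinvgen : ∀ u : G, u * u = 1 → ∀ g : G,
      u⁻¹ * (g⁻¹ * u * g * u) * u = (g⁻¹ * u * g * u)⁻¹ := by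
    intro u huu g
    have huinv : u⁻¹ = u := inv_eq_of_mul_eq_one_right huu
    rw [huinv]
    calc u * (g⁻¹ * u * g * u) * u = (u * g⁻¹ * u * g) * (u * u) := by group
      _ = u * g⁻¹ * u * g := by rw [huu]; group
      _ = u⁻¹ * g⁻¹ * u⁻¹ * g := by rw [huinv]
      _ = (g⁻¹ * u * g * u)⁻¹ := by group
  have hka : a⁻¹ * k * a = k⁻¹ := by
    obtain ⟨g, _, hkg⟩ := Finset.mem_image.mp (hKa ▸ hk)
    rw [← hkg]
    exact hinvgen a haa g
  have hkb : b⁻¹ * k * b = k⁻¹ := by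
    obtain ⟨g, _, hkg⟩ := Finset.mem_image.mp (hKb ▸ hk)
    rw [← hkg]
    exact hinvgen b hbb g
  -- hence a*b commutes with k, contradiction
  have hcomm : k⁻¹ * (a * b) * k = a * b := by
    have h1 : (a * b)⁻¹ * k * (a * b) = b⁻¹ * (a⁻¹ * k * a) * b := by group
    have h2 : (a * b)⁻¹ * k * (a * b) = k := by
      rw [h1, hka]
      have : b⁻¹ * k⁻¹ * b = (b⁻¹ * k * b)⁻¹ := by group
      rw [this, hkb, inv_inv]
    have h3 : k * (a * b) = (a * b) * k := by
      have := congrArg (fun z => (a * b) * z) h2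
      calc k * (a * b) = (a * b) * ((a * b)⁻¹ * k * (a * b)) := by group
        _ = (a * b) * k := by rw [h2]
    calc k⁻¹ * (a * b) * k = k⁻¹ * ((a * b) * k) := by group
      _ = k⁻¹ * (k * (a * b)) := by rw [← h3]
      _ = a * b := by group
  have habH : a * b ∈ H := H.mul_mem ha hb
  have hkH : k ∉ H := hK0notH k hk
  have hab1 : a * b = 1 := hFrob k hkH (a * b) habH (by rw [hcomm]; exact habH)
  apply hab
  have : b = a⁻¹ := eq_inv_of_mul_eq_one_right hab1
  rw [this, inv_eq_of_mul_eq_one_right haa]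
end
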